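/- For the phase φ^λ(x,t;ω) := (λ/t)√(λ² + |x−tω|²), the rescaled Gauss map is independent of the spatial point: the unit vector in the direction of ∂_{ω_1}∇_{x,t}φ^λ ∧ ⋯ ∧ ∂_{ω_{n−1}}∇_{x,t}φ^λ equals ±(ω,1)/√(1+|ω|²) ∈ ℝ^n. Equivalently, the n-vector ∂_{ω_1}∇_{x,t}φ^λ ∧ ⋯ ∧ ∂_{ω_{n−1}}∇_{x,t}φ^λ is parallel to (ω,1). -/

import Mathlib

/-!
Write `c = (ω, 1)`, `R(y) = √(λ² + |y|²)` and `y = x − t w`. Moving `(x, t)` along `c` gives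
`φ^λ(x + rω, t + r; w) = λ/(t + r) · R(y + r(ω − w))`, so
`⟨c, ∇_{x,t} φ^λ(x, t; w)⟩ = −λR(y)/t² + λ⟨y, ω − w⟩/(t R(y))`.
On the line `w = ω + s e_j` the second term is `−λ s y_j/(t R(y))`, and the `s`-derivative at `0`
of the whole expression vanishes. Hence every row `∂_{ω_j}∇_{x,t}φ^λ` is orthogonal to `c`, so `c`
is in the kernel of the matrix with rows `∂_{ω_1}∇φ^λ, …, ∂_{ω_{n−1}}∇φ^λ, u` whenever `u ⊥ c`:
the linear form `u ↦ det(…, u)` (the Hodge dual of the wedge product) vanishes on `c^⊥` and is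
therefore a multiple of `⟨c, ·⟩`.
-/

open Matrix

theorem exists_det_snoc_eq_mul_dotProduct {K : Type*} [Field K] {m : ℕ}
    (A : Fin m → Fin (m + 1) → K) {c : Fin (m + 1) → K} (hc : c ≠ 0)
    (hA : ∀ j, A j ⬝ᵥ c = 0) :
    ∃ a : K, ∀ u, (Matrix.of (Fin.snoc A u)).det = a * (c ⬝ᵥ u) := by
  set detLast := (detRowAlternating : AlternatingMap K _ K _).toMultilinearMap.curryRight A
  have hker : LinearMap.ker (dotProductBilin K K c) ≤ LinearMap.ker detLast := by
    intro u hu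
    refine exists_mulVec_eq_zero_iff.1 ⟨c, hc, funext fun i => Fin.lastCases ?_ (fun j => ?_) i⟩
    · simpa [mulVec, dotProduct_comm] using hu
    · simpa [mulVec] using hA j
  obtain ⟨a, ha⟩ : ∃ a : K, a • dotProductBilin K K c = detLast := by
    simpa [Submodule.mem_span_singleton] using
      mem_span_of_iInf_ker_le_ker (ι := Unit) (L := fun _ => dotProductBilin K K c)
        (by simpa using hker)
  refine ⟨a, fun u => ?_⟩
  have h := (LinearMap.congr_fun ha u).symm
  simp only [detLast, LinearMap.smul_apply, dotProductBilin_apply_apply, smul_eq_mul,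
    MultilinearMap.curryRight_apply] at h
  exact h

noncomputable section

variable {m : ℕ} {lam : ℝ}

def phaseRadius (lam : ℝ) (y : Fin m → ℝ) : ℝ := √(lam ^ 2 + ∑ i, y i ^ 2)

theorem sq_add_sum_sq_pos (hlam : lam ≠ 0) (y : Fin m → ℝ) : 0 < lam ^ 2 + ∑ i, y i ^ 2 := by
  positivity

theorem phaseRadius_pos (hlam : lam ≠ 0) (y : Fin m → ℝ) : 0 < phaseRadius lam y :=
  Real.sqrt_pos.2 (sq_add_sum_sq_pos hlam y)

theorem hasDerivAt_phaseRadius_line (hlam : lam ≠ 0) (y d : Fin m → ℝ) :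
    HasDerivAt (fun r : ℝ => phaseRadius lam (y + r • d)) (y ⬝ᵥ d / phaseRadius lam y) 0 := by
  have hcoord (i : Fin m) : HasDerivAt (fun r : ℝ => (y + r • d) i ^ 2) (2 * (y i * d i)) 0 :=
    (((hasDerivAt_mul_const (d i)).const_add (y i)).fun_pow 2).congr_deriv (by norm_num; ring)
  have hq := (HasDerivAt.fun_sum fun i (_ : i ∈ Finset.univ) => hcoord i).const_add (lam ^ 2)
  refine (hq.sqrt (by simpa using (sq_add_sum_sq_pos hlam y).ne')).congr_deriv ?_
  have := (phaseRadius_pos hlam y).ne'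
  unfold phaseRadius at *
  simp only [zero_smul, add_zero, ← Finset.mul_sum, dotProduct]
  field_simp

@[fun_prop]
theorem differentiable_phaseRadius (hlam : lam ≠ 0) :
    Differentiable ℝ (phaseRadius (m := m) lam) :=
  fun y => (by fun_prop : DifferentiableAt ℝ (fun y : Fin m → ℝ => lam ^ 2 + ∑ i, y i ^ 2) y).sqrt
    (sq_add_sum_sq_pos hlam y).ne'

def phase (lam : ℝ) (X : Fin (m + 1) → ℝ) (w : Fin m → ℝ) : ℝ :=
  lam / X (Fin.last m) * √(lam ^ 2 + ∑ i, (X i.castSucc - X (Fin.last m) * w i) ^ 2)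

theorem phase_snoc_add_smul (x w : Fin m → ℝ) (t r : ℝ) (v : Fin (m + 1) → ℝ) :
    phase lam (Fin.snoc x t + r • v) w =
      lam / (t + r * v (Fin.last m)) *
        phaseRadius lam ((x - t • w) + r • (Fin.init v - v (Fin.last m) • w)) := by
  simp only [phase, phaseRadius, Pi.add_apply, Pi.smul_apply, Pi.sub_apply, smul_eq_mul,
    Fin.snoc_castSucc, Fin.snoc_last, Fin.init]
  congr 3
  exact Finset.sum_congr rfl fun i _ => by ring

theorem snoc_dotProduct {R : Type*} [CommSemiring R] (a : Fin m → R) (b : R)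
    (v : Fin (m + 1) → R) : Fin.snoc a b ⬝ᵥ v = a ⬝ᵥ Fin.init v + b * v (Fin.last m) := by
  simp [dotProduct, Fin.sum_univ_castSucc, Fin.init]

def phaseGrad (lam : ℝ) (x : Fin m → ℝ) (t : ℝ) (w : Fin m → ℝ) : Fin (m + 1) → ℝ :=
  let y := x - t • w
  Fin.snoc ((lam / (t * phaseRadius lam y)) • y)
    (-(lam / t ^ 2) * phaseRadius lam y - lam * (y ⬝ᵥ w) / (t * phaseRadius lam y))

theorem hasDerivAt_phase_snoc_line (hlam : lam ≠ 0) {t : ℝ} (ht : t ≠ 0) (x w : Fin m → ℝ)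
    (v : Fin (m + 1) → ℝ) :
    HasDerivAt (fun r : ℝ => phase lam (Fin.snoc x t + r • v) w)
      (phaseGrad lam x t w ⬝ᵥ v) 0 := by
  have hfactor : HasDerivAt (fun r : ℝ => lam / (t + r * v (Fin.last m)))
      (-(lam * v (Fin.last m)) / t ^ 2) 0 := by
    have := (hasDerivAt_const (0 : ℝ) lam).div
      ((hasDerivAt_mul_const (v (Fin.last m))).const_add t) (by simpa using ht)
    exact this.congr_deriv (by simp)
  simp only [phase_snoc_add_smul]
  refine (hfactor.mul (hasDerivAt_phaseRadius_line hlam _ _)).congr_deriv ?_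
  have := (phaseRadius_pos hlam (x - t • w)).ne'
  simp only [phaseGrad, snoc_dotProduct, smul_dotProduct, dotProduct_sub, dotProduct_smul,
    smul_eq_mul, zero_smul, zero_mul, add_zero]
  field_simp
  ring

theorem differentiable_phaseGrad (hlam : lam ≠ 0) {t : ℝ} (ht : t ≠ 0) (x : Fin m → ℝ) :
    Differentiable ℝ (phaseGrad lam x t) := by
  intro w
  have hR0 (w : Fin m → ℝ) := (phaseRadius_pos hlam (x - t • w)).ne'
  refine differentiableAt_pi.2 fun k => Fin.lastCases ?_ (fun i => ?_) k
  · simp only [phaseGrad, Fin.snoc_last, dotProduct]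
    fun_prop (disch := simp [ht, hR0])
  · simp only [phaseGrad, Fin.snoc_castSucc]
    fun_prop (disch := simp [ht, hR0])

theorem deriv_phase_snoc_line (hlam : lam ≠ 0) {t : ℝ} (ht : t ≠ 0) (x w : Fin m → ℝ)
    (v : Fin (m + 1) → ℝ) :
    deriv (fun r : ℝ => phase lam (Fin.snoc x t + r • v) w) 0 = phaseGrad lam x t w ⬝ᵥ v :=
  (hasDerivAt_phase_snoc_line hlam ht x w v).deriv

theorem hasDerivAt_phaseGrad_line_dotProduct_snoc (hlam : lam ≠ 0) {t : ℝ} (ht : t ≠ 0)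
    (x ω : Fin m → ℝ) (j : Fin m) :
    HasDerivAt (fun s : ℝ => phaseGrad lam x t (ω + s • Pi.single j 1) ⬝ᵥ Fin.snoc ω 1) 0 0 := by
  set v := x - t • ω
  set d : Fin m → ℝ := -t • Pi.single j 1
  have hline (s : ℝ) : x - t • (ω + s • Pi.single j 1) = v + s • d := by
    simp only [v, d]; module
  have hF : (fun s : ℝ => phaseGrad lam x t (ω + s • Pi.single j 1) ⬝ᵥ Fin.snoc ω 1) =
      fun s => -(lam / t ^ 2) * phaseRadius lam (v + s • d) -
        lam / t * (s * ((v j - s * t) / phaseRadius lam (v + s • d))) := by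
    funext s
    have := (phaseRadius_pos hlam (v + s • d)).ne'
    simp only [phaseGrad, hline, snoc_dotProduct, Fin.init_snoc, Fin.snoc_last, smul_dotProduct,
      dotProduct_add, dotProduct_smul, dotProduct_single, smul_eq_mul, mul_one]
    simp only [d, Pi.add_apply, Pi.smul_apply, Pi.single_eq_same, smul_eq_mul]
    field_simp
    ring
  rw [hF]
  have hR := hasDerivAt_phaseRadius_line hlam v d
  have hR0 : phaseRadius lam (v + (0 : ℝ) • d) ≠ 0 := (phaseRadius_pos hlam _).ne'
  have hq := ((hasDerivAt_mul_const t).const_sub (v j)).fun_div hR hR0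
  have h := (hR.const_mul (-(lam / t ^ 2))).fun_sub
    (((hasDerivAt_id' 0).fun_mul hq).const_mul (lam / t))
  refine h.congr_deriv ?_
  have := (phaseRadius_pos hlam v).ne'
  simp only [d, dotProduct_smul, dotProduct_single, zero_smul, add_zero, zero_mul, sub_zero,
    smul_eq_mul, mul_one, one_mul]
  field_simp
  ring

theorem mixedHessian_row_dotProduct_snoc (hlam : lam ≠ 0) {t : ℝ} (ht : t ≠ 0)
    (x ω : Fin m → ℝ) (j : Fin m) :
    (fun k => deriv (fun s : ℝ => deriv (fun r : ℝ =>
        phase lam (Fin.snoc x t + r • Pi.single k 1) (ω + s • Pi.single j 1)) 0) 0) ⬝ᵥ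
      Fin.snoc ω 1 = 0 := by
  have hline : DifferentiableAt ℝ (fun s : ℝ => ω + s • (Pi.single j 1 : Fin m → ℝ)) 0 := by
    fun_prop
  have hΦ := ((differentiable_phaseGrad hlam ht x _).comp (0 : ℝ) hline).hasDerivAt
  rw [Function.comp_def] at hΦ
  have hentry (k : Fin (m + 1)) := (hasDerivAt_pi.1 hΦ k).deriv
  simp only [deriv_phase_snoc_line hlam ht, dotProduct_single, mul_one, hentry]
  have hsum : HasDerivAt (fun s : ℝ => phaseGrad lam x t (ω + s • Pi.single j 1) ⬝ᵥ Fin.snoc ω 1)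
      (deriv (fun s : ℝ => phaseGrad lam x t (ω + s • Pi.single j 1)) 0 ⬝ᵥ Fin.snoc ω 1) 0 :=
    HasDerivAt.fun_sum fun k _ => (hasDerivAt_pi.1 hΦ k).mul_const _
  exact hsum.unique (hasDerivAt_phaseGrad_line_dotProduct_snoc hlam ht x ω j)

end

theorem stmt_6_general (m : ℕ) (lam : ℝ) (hlam : 0 < lam)
    (x ω : Fin m → ℝ) (t : ℝ) (ht : t ≠ 0) :
    let φ : (Fin (m + 1) → ℝ) → (Fin m → ℝ) → ℝ := fun X w =>
      (lam / X (Fin.last m)) *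
        Real.sqrt (lam ^ 2 + ∑ i : Fin m, (X i.castSucc - X (Fin.last m) * w i) ^ 2)
    let X0 : Fin (m + 1) → ℝ := Fin.snoc x t
    let A : Fin m → Fin (m + 1) → ℝ := fun j k =>
      deriv (fun s : ℝ => deriv (fun w : ℝ =>
          φ (X0 + w • (Pi.single k 1 : Fin (m + 1) → ℝ))
            (ω + s • (Pi.single j 1 : Fin m → ℝ))) 0) 0
    ∃ c : ℝ, ∀ u : Fin (m + 1) → ℝ,
      (Matrix.of (Fin.snoc A u)).det =
        c * ∑ k, (Fin.snoc ω 1 : Fin (m + 1) → ℝ) k * u k := by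
  intro φ X0 A
  have hc : (Fin.snoc ω 1 : Fin (m + 1) → ℝ) ≠ 0 := fun h => by
    simpa using congr_fun h (Fin.last m)
  exact exists_det_snoc_eq_mul_dotProduct A hc
    (mixedHessian_row_dotProduct_snoc hlam.ne' ht x ω)

set_option maxHeartbeats 1000000 in
/-- the rescaled Gauss map of the phase
`φ^λ(x,t;ω) = (λ/t)√(λ² + ‖x − tω‖²)` is parallel to `(ω,1)`.
The wedge `∂_{ω_1}∇_{x,t}φ^λ ∧ ⋯ ∧ ∂_{ω_m}∇_{x,t}φ^λ` (with `m = n−1 ≥ 1`)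
is encoded via its Hodge star `W`, characterized by
`det (rows a_1,…,a_m,u) = ⟪W, u⟫` for all `u : ℝⁿ`; the claim is `W = c • (ω,1)`,
i.e. `det (rows a_1,…,a_m,u) = c·⟪(ω,1),u⟫` for all `u`. -/
theorem stmt_6 (m : ℕ) (hm : 1 ≤ m) (lam : ℝ) (hlam : 0 < lam)
    (x ω : Fin m → ℝ) (t : ℝ) (ht : t ≠ 0) :
    let φ : (Fin (m + 1) → ℝ) → (Fin m → ℝ) → ℝ := fun X w =>
      (lam / X (Fin.last m)) *
        Real.sqrt (lam ^ 2 + ∑ i : Fin m, (X i.castSucc - X (Fin.last m) * w i) ^ 2)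
    let X0 : Fin (m + 1) → ℝ := Fin.snoc x t
    let A : Fin m → Fin (m + 1) → ℝ := fun j k =>
      deriv (fun s : ℝ => deriv (fun w : ℝ =>
          φ (X0 + w • (Pi.single k 1 : Fin (m + 1) → ℝ))
            (ω + s • (Pi.single j 1 : Fin m → ℝ))) 0) 0
    ∃ c : ℝ, ∀ u : Fin (m + 1) → ℝ,
      (Matrix.of (Fin.snoc A u)).det =
        c * ∑ k, (Fin.snoc ω 1 : Fin (m + 1) → ℝ) k * u k :=
  stmt_6_general m lam hlam x ω t ht
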